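/- arXiv:1307.6427 — 4 statements merged into one kernel-verified Lean document; each statement's English description precedes it below -/
import Mathlib

section
/- Let m ≥ 2 be an integer and γ > m - 1. For the discretization T_k = T(1 - (1 - k/N)^γ), there exists a constant C > 0 (depending on T, γ, m but not N) such that for all N ≥ 2, the sum over j from 0 to N-2 of Δ_{T_{j+1}}^{(m+1)/2} (T - T_j)^{-m/2} is bounded by C N^{-(m-1)/2}. -/
/-!
With `b = 1 - j/N` one has `T - T_j = T b^γ` and `T_{j+1} - T_j = T (b^γ - (b - 1/N)^γ)`.
Since `γ ≥ 1`, convexity of `x ↦ x^γ` gives `T_{j+1} - T_j ≤ T γ N⁻¹ b^(γ-1)`, so the `j`-th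
term is at most `(Tγ)^((m+1)/2) T^(-m/2) N^(-(m+1)/2) b^α` with `α = (γ - m - 1)/2 > -1`.
Reindexing by `i = N - j`, `Σ_j b_j^α = N^(-α) Σ_{1 ≤ i ≤ N} i^α = O(N)` because `α > -1`,
which leaves the factor `N^(1 - (m+1)/2) = N^(-(m-1)/2)`.
-/

open Real Finset

namespace Real

private lemma one_add_mul_div_sub_one_mul_rpow {p a b : ℝ} (hb : 0 < b) :
    (1 + p * (a / b - 1)) * b ^ p = b ^ p - p * b ^ (p - 1) * (b - a) := by
  have hbb : b ^ p = b ^ (p - 1) * b := by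
    rw [← rpow_add_one hb.ne', sub_add_cancel]
  rw [hbb]
  field_simp
  ring

lemma rpow_sub_rpow_le_mul_sub {p a b : ℝ} (hp : 1 ≤ p) (ha : 0 ≤ a) (hab : a ≤ b) :
    b ^ p - a ^ p ≤ p * b ^ (p - 1) * (b - a) := by
  obtain rfl | hb := (ha.trans hab).eq_or_lt
  · obtain rfl : a = 0 := le_antisymm hab ha
    simp
  have bernoulli := one_add_mul_self_le_rpow_one_add (s := a / b - 1) (by
    have : 0 ≤ a / b := by positivity
    linarith) hp
  rw [add_sub_cancel] at bernoulli
  have := mul_le_mul_of_nonneg_right bernoulli (rpow_nonneg hb.le p)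
  rw [one_add_mul_div_sub_one_mul_rpow hb, ← mul_rpow (by positivity) hb.le,
    div_mul_cancel₀ _ hb.ne'] at this
  linarith

lemma mul_rpow_sub_one_mul_sub_le_rpow_sub_rpow {p a b : ℝ} (hp₀ : 0 ≤ p) (hp₁ : p ≤ 1)
    (ha : 0 ≤ a) (hab : a ≤ b) :
    p * b ^ (p - 1) * (b - a) ≤ b ^ p - a ^ p := by
  obtain rfl | hb := (ha.trans hab).eq_or_lt
  · obtain rfl : a = 0 := le_antisymm hab ha
    simp
  have bernoulli := rpow_one_add_le_one_add_mul_self (s := a / b - 1) (by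
    have : 0 ≤ a / b := by positivity
    linarith) hp₀ hp₁
  rw [add_sub_cancel] at bernoulli
  have := mul_le_mul_of_nonneg_right bernoulli (rpow_nonneg hb.le p)
  rw [one_add_mul_div_sub_one_mul_rpow hb, ← mul_rpow (by positivity) hb.le,
    div_mul_cancel₀ _ hb.ne'] at this
  linarith

end Real

lemma sum_range_add_one_rpow_le {α : ℝ} (hα : -1 < α) :
    ∃ C > 0, ∀ N : ℕ, ∑ k ∈ range N, ((k : ℝ) + 1) ^ α ≤ C * (N : ℝ) ^ (α + 1) := by
  rcases le_or_gt 0 α with hα₀ | hα₀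
  · refine ⟨1, one_pos, fun N => ?_⟩
    calc ∑ k ∈ range N, ((k : ℝ) + 1) ^ α ≤ ∑ _k ∈ range N, (N : ℝ) ^ α := by
          gcongr with k hk
          exact_mod_cast mem_range.mp hk
      _ = 1 * (N : ℝ) ^ (α + 1) := by
          rw [sum_const, card_range, nsmul_eq_mul, one_mul, rpow_add_one' (by positivity)
            (by linarith), mul_comm]
  · -- concavity of `x ↦ x ^ (α + 1)` makes the sum telescope
    have hp : 0 < α + 1 := by linarith
    refine ⟨(α + 1)⁻¹, by positivity, fun N => ?_⟩
    induction N with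
    | zero => simp [zero_rpow hp.ne']
    | succ n ih =>
      have step := mul_rpow_sub_one_mul_sub_le_rpow_sub_rpow hp.le (by linarith)
        (Nat.cast_nonneg n) (le_add_of_nonneg_right zero_le_one)
      rw [add_sub_cancel_right, add_sub_cancel_left, mul_one] at step
      rw [sum_range_succ, Nat.cast_succ]
      calc _ ≤ (α + 1)⁻¹ * (n : ℝ) ^ (α + 1) + (α + 1)⁻¹ *
              (((n : ℝ) + 1) ^ (α + 1) - (n : ℝ) ^ (α + 1)) := by
            gcongr
            rwa [le_inv_mul_iff₀ hp]
        _ = _ := by ring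

lemma sum_range_one_sub_div_rpow_le {α : ℝ} (hα : -1 < α) :
    ∃ C > 0, ∀ N : ℕ, ∑ j ∈ range N, (1 - (j : ℝ) / N) ^ α ≤ C * N := by
  obtain ⟨C, hC, hsum⟩ := sum_range_add_one_rpow_le hα
  refine ⟨C, hC, fun N => ?_⟩
  rcases N.eq_zero_or_pos with rfl | hN
  · simp
  have hN' : (0 : ℝ) < N := by exact_mod_cast hN
  calc ∑ j ∈ range N, (1 - (j : ℝ) / N) ^ α
      = ∑ k ∈ range N, (N : ℝ) ^ (-α) * ((k : ℝ) + 1) ^ α := by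
        rw [← sum_range_reflect]
        refine sum_congr rfl fun k hk => ?_
        have hk : k < N := mem_range.mp hk
        rw [rpow_neg hN'.le, ← inv_mul_eq_div, ← inv_rpow hN'.le,
          ← mul_rpow (by positivity) (by positivity)]
        congr 1
        rw [Nat.cast_sub (by omega), Nat.cast_sub (by omega)]
        field_simp
        push_cast
        ring
    _ = (N : ℝ) ^ (-α) * ∑ k ∈ range N, ((k : ℝ) + 1) ^ α := (mul_sum ..).symm
    _ ≤ (N : ℝ) ^ (-α) * (C * (N : ℝ) ^ (α + 1)) := by gcongr; exact hsum N
    _ = C * N := by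
        rw [mul_left_comm, ← rpow_add hN', neg_add_cancel_left, rpow_one]

lemma rpow_increment_mul_rpow_le {T γ q r b h : ℝ} (hT : 0 ≤ T) (hγ : 1 ≤ γ) (hq : 0 ≤ q)
    (hh : 0 < h) (hhb : h ≤ b) :
    (T * (b ^ γ - (b - h) ^ γ)) ^ q * (T * b ^ γ) ^ r
      ≤ (T * γ) ^ q * T ^ r * h ^ q * b ^ ((γ - 1) * q + γ * r) := by
  have hb : 0 < b := hh.trans_le hhb
  have hincr : T * (b ^ γ - (b - h) ^ γ) ≤ T * γ * h * b ^ (γ - 1) := by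
    have := rpow_sub_rpow_le_mul_sub hγ (sub_nonneg.mpr hhb) (sub_le_self b hh.le)
    rw [sub_sub_cancel] at this
    nlinarith
  have hincr₀ : 0 ≤ T * (b ^ γ - (b - h) ^ γ) :=
    mul_nonneg hT (sub_nonneg.mpr (rpow_le_rpow (sub_nonneg.mpr hhb) (sub_le_self b hh.le)
      (by linarith)))
  calc (T * (b ^ γ - (b - h) ^ γ)) ^ q * (T * b ^ γ) ^ r
      ≤ (T * γ * h * b ^ (γ - 1)) ^ q * (T * b ^ γ) ^ r := by gcongr
    _ = (T * γ) ^ q * T ^ r * h ^ q * b ^ ((γ - 1) * q + γ * r) := by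
        rw [mul_rpow (x := T * γ * h) (by positivity) (by positivity),
          mul_rpow (x := T * γ) (by positivity) hh.le, mul_rpow hT (rpow_nonneg hb.le γ),
          ← rpow_mul hb.le, ← rpow_mul hb.le, rpow_add hb]
        ring

noncomputable def gradedMesh (T γ : ℝ) (N k : ℕ) : ℝ := T * (1 - (1 - (k : ℝ) / N) ^ γ)

lemma gradedMesh_term_le {T γ q : ℝ} (r : ℝ) (hT : 0 ≤ T) (hγ : 1 ≤ γ) (hq : 0 ≤ q)
    {N j : ℕ} (hj : j + 1 ≤ N) :
    (gradedMesh T γ N (j + 1) - gradedMesh T γ N j) ^ q * (T - gradedMesh T γ N j) ^ r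
      ≤ (T * γ) ^ q * T ^ r * (N : ℝ) ^ (-q) * (1 - (j : ℝ) / N) ^ ((γ - 1) * q + γ * r) := by
  have hN : (0 : ℝ) < N := by exact_mod_cast (by omega : 0 < N)
  have hstep : gradedMesh T γ N (j + 1) - gradedMesh T γ N j
      = T * ((1 - (j : ℝ) / N) ^ γ - (1 - (j : ℝ) / N - (N : ℝ)⁻¹) ^ γ) := by
    simp only [gradedMesh]; push_cast; ring_nf
  have hrest : T - gradedMesh T γ N j = T * (1 - (j : ℝ) / N) ^ γ := by
    simp only [gradedMesh]; ring
  have hmesh : (N : ℝ)⁻¹ ≤ 1 - (j : ℝ) / N := by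
    rw [inv_eq_one_div, le_sub_iff_add_le, ← add_div, div_le_one hN]
    exact_mod_cast (by omega : 1 + j ≤ N)
  rw [hstep, hrest, rpow_neg hN.le, ← inv_rpow hN.le]
  exact rpow_increment_mul_rpow_le hT hγ hq (by positivity) hmesh

/-- Let `m ≥ 2` be an integer and `γ > m - 1`.  For the discretization
`T_k = T(1-(1-k/N)^γ)` there is a constant `C > 0` (independent of `N`) such that
`Σ_{j=0}^{N-2} Δ_{T_{j+1}}^{(m+1)/2} (T - T_j)^{-m/2} ≤ C N^{-(m-1)/2}` for all `N ≥ 2`. -/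
theorem stmt_3 (T : ℝ) (hT : 0 < T) (m : ℕ) (hm : 2 ≤ m) (γ : ℝ) (hγ : (m : ℝ) - 1 < γ)
    (Tk : ℕ → ℕ → ℝ)
    (hTk : ∀ N k, Tk N k = T * (1 - (1 - (k : ℝ) / (N : ℝ)) ^ γ)) :
    ∃ C : ℝ, 0 < C ∧ ∀ N : ℕ, 2 ≤ N →
      ∑ j ∈ Finset.range (N - 1),
          (Tk N (j + 1) - Tk N j) ^ (((m : ℝ) + 1) / 2) * (T - Tk N j) ^ (-(m : ℝ) / 2)
        ≤ C * (N : ℝ) ^ (-((m : ℝ) - 1) / 2) := by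
  obtain rfl : Tk = gradedMesh T γ := funext₂ hTk
  have hm' : (2 : ℝ) ≤ m := by exact_mod_cast hm
  set q : ℝ := ((m : ℝ) + 1) / 2
  set r : ℝ := -(m : ℝ) / 2
  set α := (γ - 1) * q + γ * r
  have hα : -1 < α := by
    have : α = (γ - m - 1) / 2 := by simp only [α, q, r]; ring
    linarith
  obtain ⟨C, hC, hsum⟩ := sum_range_one_sub_div_rpow_le hα
  have hγ₀ : 0 < γ := by linarith
  refine ⟨(T * γ) ^ q * T ^ r * C, by positivity, fun N hN => ?_⟩
  have hN : (0 : ℝ) < N := by positivity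
  set K := (T * γ) ^ q * T ^ r * (N : ℝ) ^ (-q)
  calc _ ≤ ∑ j ∈ range (N - 1), K * (1 - (j : ℝ) / N) ^ α :=
        sum_le_sum fun j hj ↦
          gradedMesh_term_le r hT.le (by linarith) (by positivity) (by grind)
    _ ≤ ∑ j ∈ range N, K * (1 - (j : ℝ) / N) ^ α := by
        refine sum_le_sum_of_subset_of_nonneg (range_subset_range.mpr (N.sub_le 1))
          fun j hj _ ↦ mul_nonneg (by positivity) (rpow_nonneg ?_ _)
        rw [sub_nonneg, div_le_one hN]
        exact_mod_cast (mem_range.mp hj).le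
    _ = K * ∑ j ∈ range N, (1 - (j : ℝ) / N) ^ α := (mul_sum ..).symm
    _ ≤ K * (C * N) := by gcongr; exact hsum N
    _ = (T * γ) ^ q * T ^ r * C * (N : ℝ) ^ (-((m : ℝ) - 1) / 2) := by
        rw [show -((m : ℝ) - 1) / 2 = -q + 1 by ring, rpow_add_one hN.ne']
        ring
end

section
/- Let m ≥ 2 and 0 < γ < m - 1. For the discretization T_k = T(1 - (1 - k/N)^γ), there exists a constant C > 0 (depending on T, γ, m but not N) such that the sum over j from 0 to N-2 of Δ_{T_{j+1}}^{(m+1)/2} (T - T_j)^{-m/2} is bounded by C N^{-γ/2} for all N ≥ 2. -/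
/-!
With `s = N - j`, the mesh satisfies `T - T_j = T s^γ / N^γ`, and the mean value theorem for
`t ↦ t^γ` on `[s - 1, s]` gives `T_{j+1} - T_j ≤ 2Tγ s^(γ-1) / N^γ`. Hence the `j`-th term is at
most a constant times `N^(-γ/2) s^(-(m+1-γ)/2)`, and since `γ < m - 1` the exponent of `s` is below
`-1`, so the sum over `s` is dominated by a convergent `p`-series.
-/

open Real Finset

lemma rpow_le_two_mul_rpow_of_half_le {c x p : ℝ} (hx : 0 < x) (hxc : x / 2 ≤ c) (hcx : c ≤ x)
    (hp : -1 ≤ p) : c ^ p ≤ 2 * x ^ p := by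
  have hc : 0 < c := by linarith
  rcases le_or_gt 0 p with hp0 | hp0
  · calc c ^ p ≤ x ^ p := rpow_le_rpow hc.le hcx hp0
      _ ≤ 2 * x ^ p := by linarith [rpow_pos_of_pos hx p]
  · calc c ^ p ≤ (x / 2) ^ p := rpow_le_rpow_of_nonpos (by positivity) hxc hp0.le
      _ = 2 ^ (-p) * x ^ p := by rw [div_rpow hx.le zero_le_two, rpow_neg zero_le_two]; ring
      _ ≤ 2 ^ (1 : ℝ) * x ^ p := by gcongr <;> linarith
      _ = 2 * x ^ p := by rw [rpow_one]

lemma rpow_sub_rpow_le {x y γ : ℝ} (hγ : 0 ≤ γ) (hy : 0 < y) (hyx : y < x) (hxy : x ≤ 2 * y) :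
    x ^ γ - y ^ γ ≤ 2 * γ * x ^ (γ - 1) * (x - y) := by
  obtain ⟨c, ⟨hyc, hcx⟩, hc⟩ := exists_hasDerivAt_eq_slope (fun t => t ^ γ)
    (fun t => γ * t ^ (γ - 1)) hyx (continuousOn_id.rpow_const fun _ _ => Or.inr hγ)
    (fun t ht => hasDerivAt_rpow_const (Or.inl (hy.trans ht.1).ne'))
  have hslope : x ^ γ - y ^ γ = γ * c ^ (γ - 1) * (x - y) := by
    rw [hc, div_mul_cancel₀ _ (sub_pos.2 hyx).ne']
  have hc_le : c ^ (γ - 1) ≤ 2 * x ^ (γ - 1) :=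
    rpow_le_two_mul_rpow_of_half_le (hy.trans hyx) (by linarith) hcx.le (by linarith)
  calc x ^ γ - y ^ γ = γ * c ^ (γ - 1) * (x - y) := hslope
    _ ≤ γ * (2 * x ^ (γ - 1)) * (x - y) := by gcongr
    _ = 2 * γ * x ^ (γ - 1) * (x - y) := by ring

section gradedMesh

variable {T γ : ℝ} {N k : ℕ}

lemma sub_gradedMesh (hkN : k ≤ N) (hN : 0 < N) :
    T - gradedMesh T γ N k = T * ((N - k : ℕ) : ℝ) ^ γ / (N : ℝ) ^ γ := by
  have h : 1 - (k : ℝ) / N = ((N - k : ℕ) : ℝ) / N := by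
    rw [Nat.cast_sub hkN]; field_simp
  rw [gradedMesh, h, div_rpow (Nat.cast_nonneg _) (Nat.cast_nonneg _)]
  ring

lemma gradedMesh_succ_sub (hk : k < N) :
    gradedMesh T γ N (k + 1) - gradedMesh T γ N k
      = T * (((N - k : ℕ) : ℝ) ^ γ - ((N - (k + 1) : ℕ) : ℝ) ^ γ) / (N : ℝ) ^ γ := by
  have h₀ := sub_gradedMesh (T := T) (γ := γ) hk.le (by omega)
  have h₁ := sub_gradedMesh (T := T) (γ := γ) hk (by omega)
  rw [mul_sub, sub_div, ← h₀, ← h₁]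
  ring

lemma gradedMesh_le_succ (hT : 0 ≤ T) (hγ : 0 ≤ γ) (hk : k < N) :
    gradedMesh T γ N k ≤ gradedMesh T γ N (k + 1) := by
  rw [← sub_nonneg, gradedMesh_succ_sub hk]
  have hle : ((N - (k + 1) : ℕ) : ℝ) ≤ ((N - k : ℕ) : ℝ) := by gcongr; omega
  have hpow : 0 ≤ ((N - k : ℕ) : ℝ) ^ γ - ((N - (k + 1) : ℕ) : ℝ) ^ γ :=
    sub_nonneg.2 (rpow_le_rpow (Nat.cast_nonneg _) hle hγ)
  positivity

lemma gradedMesh_succ_sub_le (hT : 0 ≤ T) (hγ : 0 ≤ γ) (hk : k + 2 ≤ N) :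
    gradedMesh T γ N (k + 1) - gradedMesh T γ N k
      ≤ 2 * T * γ * ((N - k : ℕ) : ℝ) ^ (γ - 1) / (N : ℝ) ^ γ := by
  have hstep : ((N - k : ℕ) : ℝ) - ((N - (k + 1) : ℕ) : ℝ) = 1 := by
    rw [sub_eq_iff_eq_add']; norm_cast; omega
  have hone : (1 : ℝ) ≤ ((N - (k + 1) : ℕ) : ℝ) := by norm_cast; omega
  have hsub := rpow_sub_rpow_le (x := ((N - k : ℕ) : ℝ)) (y := ((N - (k + 1) : ℕ) : ℝ)) hγ
    (by linarith) (by linarith) (by linarith)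
  rw [hstep, mul_one] at hsub
  calc gradedMesh T γ N (k + 1) - gradedMesh T γ N k
      = T * (((N - k : ℕ) : ℝ) ^ γ - ((N - (k + 1) : ℕ) : ℝ) ^ γ) / (N : ℝ) ^ γ :=
        gradedMesh_succ_sub (by omega)
    _ ≤ T * (2 * γ * ((N - k : ℕ) : ℝ) ^ (γ - 1)) / (N : ℝ) ^ γ := by gcongr
    _ = 2 * T * γ * ((N - k : ℕ) : ℝ) ^ (γ - 1) / (N : ℝ) ^ γ := by ring

lemma gradedMesh_succ_sub_rpow_mul_le (hT : 0 < T) (hγ : 0 ≤ γ) {p r : ℝ} (hp : 0 ≤ p)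
    (hk : k + 2 ≤ N) :
    (gradedMesh T γ N (k + 1) - gradedMesh T γ N k) ^ p * (T - gradedMesh T γ N k) ^ r
      ≤ (2 * T * γ) ^ p * T ^ r * ((N - k : ℕ) : ℝ) ^ ((γ - 1) * p + γ * r)
          * (N : ℝ) ^ (-γ * (p + r)) := by
  have hs : (0 : ℝ) < ((N - k : ℕ) : ℝ) := by norm_cast; omega
  have hN : (0 : ℝ) < N := by norm_cast; omega
  calc (gradedMesh T γ N (k + 1) - gradedMesh T γ N k) ^ p * (T - gradedMesh T γ N k) ^ r
      ≤ (2 * T * γ * ((N - k : ℕ) : ℝ) ^ (γ - 1) / (N : ℝ) ^ γ) ^ p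
          * (T * ((N - k : ℕ) : ℝ) ^ γ / (N : ℝ) ^ γ) ^ r := by
        rw [sub_gradedMesh (by omega) (by omega)]
        gcongr
        · exact sub_nonneg.2 (gradedMesh_le_succ hT.le hγ (by omega))
        · exact gradedMesh_succ_sub_le hT.le hγ hk
    _ = _ := by
        rw [div_rpow (by positivity) (by positivity), div_rpow (by positivity) (by positivity),
          mul_rpow (by positivity) (by positivity), mul_rpow hT.le (by positivity),
          ← rpow_mul hs.le, ← rpow_mul hs.le, ← rpow_mul hN.le, ← rpow_mul hN.le,
          rpow_add hs, neg_mul, rpow_neg hN.le, mul_add, rpow_add hN]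
        field_simp

end gradedMesh

lemma sum_range_comp_sub_le_tsum {f : ℕ → ℝ} (hf : Summable f) (hf₀ : ∀ k, 0 ≤ f k) {n N : ℕ}
    (hn : n ≤ N + 1) : ∑ j ∈ range n, f (N - j) ≤ ∑' k, f k := by
  rw [← sum_image (g := (N - ·)) fun a ha b hb hab => by
    simp only [coe_range, Set.mem_Iio] at ha hb hab; omega]
  exact hf.sum_le_tsum _ fun k _ => hf₀ k

theorem stmt_4_general (T : ℝ) (hT : 0 < T) (m : ℕ) (γ : ℝ)
    (hγ0 : 0 < γ) (hγ : γ < (m : ℝ) - 1)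
    (Tk : ℕ → ℕ → ℝ)
    (hTk : ∀ N k, Tk N k = T * (1 - (1 - (k : ℝ) / (N : ℝ)) ^ γ)) :
    ∃ C : ℝ, 0 < C ∧ ∀ N : ℕ, 2 ≤ N →
      ∑ j ∈ Finset.range (N - 1),
          (Tk N (j + 1) - Tk N j) ^ (((m : ℝ) + 1) / 2) * (T - Tk N j) ^ (-(m : ℝ) / 2)
        ≤ C * (N : ℝ) ^ (-γ / 2) := by
  obtain rfl : Tk = gradedMesh T γ := funext₂ hTk
  set e : ℝ := (γ - 1) * (((m : ℝ) + 1) / 2) + γ * (-(m : ℝ) / 2)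
  have he : e < -1 := by linarith [show e = (γ - m - 1) / 2 by ring]
  have hsum : Summable fun k : ℕ => (k : ℝ) ^ e := summable_nat_rpow.2 he
  set K : ℝ := (2 * T * γ) ^ (((m : ℝ) + 1) / 2) * T ^ (-(m : ℝ) / 2)
  have hS : 0 < ∑' k : ℕ, (k : ℝ) ^ e :=
    one_pos.trans_le <| by
      simpa using hsum.le_tsum 1 fun k _ => rpow_nonneg (Nat.cast_nonneg k) e
  refine ⟨K * ∑' k : ℕ, (k : ℝ) ^ e, by positivity, fun N hN => ?_⟩
  calc ∑ j ∈ range (N - 1),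
        (gradedMesh T γ N (j + 1) - gradedMesh T γ N j) ^ (((m : ℝ) + 1) / 2)
          * (T - gradedMesh T γ N j) ^ (-(m : ℝ) / 2)
      ≤ ∑ j ∈ range (N - 1), K * ((N - j : ℕ) : ℝ) ^ e * (N : ℝ) ^ (-γ / 2) := by
        refine sum_le_sum fun j hj => ?_
        have hj : j + 2 ≤ N := by rw [mem_range] at hj; omega
        have hexp : -γ * (((m : ℝ) + 1) / 2 + -(m : ℝ) / 2) = -γ / 2 := by ring
        simpa only [hexp] using gradedMesh_succ_sub_rpow_mul_le (p := ((m : ℝ) + 1) / 2)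
          (r := -(m : ℝ) / 2) hT hγ0.le (by positivity) hj
    _ = K * (∑ j ∈ range (N - 1), ((N - j : ℕ) : ℝ) ^ e) * (N : ℝ) ^ (-γ / 2) := by
        rw [mul_sum, sum_mul]
    _ ≤ K * (∑' k : ℕ, (k : ℝ) ^ e) * (N : ℝ) ^ (-γ / 2) := by
        gcongr
        exact sum_range_comp_sub_le_tsum hsum (fun k => rpow_nonneg (Nat.cast_nonneg k) e)
          (by omega)

/-- Let `m ≥ 2` and `0 < γ < m - 1`.  For the discretization `T_k = T(1-(1-k/N)^γ)`
there is a constant `C > 0` (independent of `N`) such that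
`Σ_{j=0}^{N-2} Δ_{T_{j+1}}^{(m+1)/2} (T - T_j)^{-m/2} ≤ C N^{-γ/2}` for all `N ≥ 2`. -/
theorem stmt_4 (T : ℝ) (hT : 0 < T) (m : ℕ) (hm : 2 ≤ m) (γ : ℝ)
    (hγ0 : 0 < γ) (hγ : γ < (m : ℝ) - 1)
    (Tk : ℕ → ℕ → ℝ)
    (hTk : ∀ N k, Tk N k = T * (1 - (1 - (k : ℝ) / (N : ℝ)) ^ γ)) :
    ∃ C : ℝ, 0 < C ∧ ∀ N : ℕ, 2 ≤ N →
      ∑ j ∈ Finset.range (N - 1),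
          (Tk N (j + 1) - Tk N j) ^ (((m : ℝ) + 1) / 2) * (T - Tk N j) ^ (-(m : ℝ) / 2)
        ≤ C * (N : ℝ) ^ (-γ / 2) :=
  stmt_4_general T hT m γ hγ0 hγ Tk hTk
end

section
/- Let F be the cumulative distribution function of the standard normal distribution and K > 0. Define, for t < 1 and y ∈ ℝ, U(t,y) = √((1−t)/(2π)) [exp(−(K+y)²/(2(1−t))) + exp(−(K−y)²/(2(1−t))) − 2exp(−y²/(2(1−t)))] + (K+y)[F(−y/√(1−t)) − F((−K−y)/√(1−t))] + (K−y)[F((K−y)/√(1−t)) − F(−y/√(1−t))]. Then as t → 1⁻, U(t,y) converges to φ'(y), where φ' is the triangular function φ'(y) = y+K for y ∈ (−K,0], φ'(y) = −y+K for y ∈ (0,K], and φ'(y) = 0 otherwise. -/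
open Real Filter Topology MeasureTheory ProbabilityTheory

/-! With `σ = √(1 - t) → 0⁺`, the prefactor `√((1 - t) / (2π))` kills the bracket of Gaussian
terms, each of which lies in `(0, 1]`, while `F (c / σ)` tends to the Heaviside function `H c`,
with `H 0 = F 0 = 1/2` by the symmetry of the Gaussian. The limit
`(K + y) (H (-y) - H (-K - y)) + (K - y) (H (K - y) - H (-y))` is then `φ' y`, case by case. -/

lemma cdf_zero_eq_half_of_map_neg_eq {μ : Measure ℝ} [IsProbabilityMeasure μ]
    [NullSingletonClass μ] (h : μ.map (fun x => -x) = μ) : cdf μ 0 = 1 / 2 := by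
  have hIci : μ (Set.Iic 0) = μ (Set.Ici 0) := by
    conv_lhs => rw [← h]
    rw [Measure.map_apply measurable_neg measurableSet_Iic]
    congr 1; ext x; simp
  have hIoi : μ (Set.Ioi 0) = μ (Set.Iic 0) := by
    rw [hIci, measure_congr Ioi_ae_eq_Ici]
  have hsum : μ.real (Set.Iic 0) + μ.real (Set.Ioi 0) = 1 := by
    rw [← Set.compl_Iic, measureReal_add_measureReal_compl measurableSet_Iic, probReal_univ]
  have hIoi_real : μ.real (Set.Ioi 0) = μ.real (Set.Iic 0) := by
    simp only [measureReal_def, hIoi]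
  rw [cdf_eq_real]
  linarith

lemma integral_Iic_stdGaussian_eq_cdf (x : ℝ) :
    ∫ u in Set.Iic x, (1 / √(2 * π)) * exp (-u ^ 2 / 2) = cdf (gaussianReal 0 1) x := by
  rw [cdf_eq_real, measureReal_def, gaussianReal_apply_eq_integral _ one_ne_zero,
    ENNReal.toReal_ofReal (setIntegral_nonneg measurableSet_Iic
      fun u _ => gaussianPDFReal_nonneg 0 1 u)]
  simp [gaussianPDFReal]

lemma cdf_gaussianReal_zero {v : NNReal} (hv : v ≠ 0) : cdf (gaussianReal 0 v) 0 = 1 / 2 :=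
  have := nullSingletonClass_gaussianReal (μ := 0) hv
  cdf_zero_eq_half_of_map_neg_eq (by rw [gaussianReal_map_neg, neg_zero])

noncomputable def halfHeaviside (c : ℝ) : ℝ := if 0 < c then 1 else if c < 0 then 0 else 1 / 2

lemma tendsto_comp_div_of_tendsto_nhdsGT_zero {α : Type*} {l : Filter α} {σ : α → ℝ}
    (hσ : Tendsto σ l (𝓝[>] 0)) {G : ℝ → ℝ} {a b : ℝ} (hbot : Tendsto G atBot (𝓝 a))
    (htop : Tendsto G atTop (𝓝 b)) (c : ℝ) :
    Tendsto (fun x => G (c / σ x)) l (𝓝 (if 0 < c then b else if c < 0 then a else G 0)) := by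
  have hinv : Tendsto (fun x => (σ x)⁻¹) l atTop := tendsto_inv_nhdsGT_zero.comp hσ
  rcases lt_trichotomy c 0 with hc | rfl | hc
  · rw [if_neg hc.not_gt, if_pos hc]
    exact hbot.comp (by simpa only [div_eq_mul_inv] using hinv.const_mul_atTop_of_neg hc)
  · simp only [zero_div, lt_irrefl, if_false]
    exact tendsto_const_nhds
  · rw [if_pos hc]
    exact htop.comp (by simpa only [div_eq_mul_inv] using hinv.const_mul_atTop hc)

lemma tendsto_sqrt_one_sub_nhdsLT_one : Tendsto (fun t : ℝ => √(1 - t)) (𝓝[<] 1) (𝓝[>] 0) := by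
  refine tendsto_nhdsWithin_iff.mpr ⟨?_, ?_⟩
  · exact tendsto_nhdsWithin_of_tendsto_nhds
      ((by fun_prop : Continuous fun t : ℝ => √(1 - t)).tendsto' 1 0 (by simp))
  · filter_upwards [self_mem_nhdsWithin] with t ht
    exact Real.sqrt_pos.mpr (sub_pos.mpr ht)

lemma tendsto_cdf_gaussianReal_div {α : Type*} {l : Filter α} {σ : α → ℝ}
    (hσ : Tendsto σ l (𝓝[>] 0)) (c : ℝ) :
    Tendsto (fun x => cdf (gaussianReal 0 1) (c / σ x)) l (𝓝 (halfHeaviside c)) := by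
  have := tendsto_comp_div_of_tendsto_nhdsGT_zero hσ (tendsto_cdf_atBot (gaussianReal 0 1))
    (tendsto_cdf_atTop _) c
  rwa [cdf_gaussianReal_zero one_ne_zero] at this

lemma exp_neg_sq_div_le_one (x : ℝ) {s : ℝ} (hs : 0 ≤ s) : exp (-x ^ 2 / (2 * s)) ≤ 1 :=
  exp_le_one_iff.mpr (div_nonpos_of_nonpos_of_nonneg (neg_nonpos.mpr (sq_nonneg x)) (by positivity))

lemma tendsto_sqrt_mul_gaussian_terms_nhdsLT_one (a b c : ℝ) :
    Tendsto (fun t : ℝ => √((1 - t) / (2 * π)) *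
      (exp (-a ^ 2 / (2 * (1 - t))) + exp (-b ^ 2 / (2 * (1 - t)))
        - 2 * exp (-c ^ 2 / (2 * (1 - t))))) (𝓝[<] 1) (𝓝 0) := by
  refine Tendsto.zero_mul_isBoundedUnder_le ?_ (isBoundedUnder_of_eventually_le (a := 4) ?_)
  · exact tendsto_nhdsWithin_of_tendsto_nhds
      ((by fun_prop : Continuous fun t : ℝ => √((1 - t) / (2 * π))).tendsto' 1 0 (by simp))
  · filter_upwards [self_mem_nhdsWithin] with t ht
    have hs : 0 ≤ 1 - t := sub_nonneg.mpr (le_of_lt ht)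
    simp only [Function.comp, Real.norm_eq_abs, abs_le]
    constructor <;> linarith [exp_neg_sq_div_le_one a hs, exp_neg_sq_div_le_one b hs,
      exp_neg_sq_div_le_one c hs, exp_pos (-a ^ 2 / (2 * (1 - t))),
      exp_pos (-b ^ 2 / (2 * (1 - t))), exp_pos (-c ^ 2 / (2 * (1 - t)))]

lemma triangle_eq_halfHeaviside {K : ℝ} (hK : 0 < K) (y : ℝ) :
    (if -K < y ∧ y ≤ 0 then y + K else if 0 < y ∧ y ≤ K then -y + K else 0) =
      (K + y) * (halfHeaviside (-y) - halfHeaviside (-K - y))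
        + (K - y) * (halfHeaviside (K - y) - halfHeaviside (-y)) := by
  unfold halfHeaviside
  rcases le_or_gt y (-K) with hy | hy
  · rw [if_neg fun h => hy.not_gt h.1, if_neg fun h => by linarith [h.1]]
    split_ifs <;> linarith
  rcases le_or_gt y 0 with hy' | hy'
  · rw [if_pos ⟨hy, hy'⟩]
    split_ifs <;> linarith
  rw [if_neg fun h => hy'.not_ge h.2]
  rcases le_or_gt y K with hy'' | hy''
  · rw [if_pos ⟨hy', hy''⟩]
    split_ifs <;> linarith
  · rw [if_neg fun h => hy''.not_ge h.2]
    split_ifs <;> linarith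

/-- For the standard normal cdf `F` and `K > 0`, the explicit heat-semigroup formula
`U(t,y)` converges, as `t → 1⁻`, to the triangular function `φ'(y)`. -/
theorem stmt_15 (K : ℝ) (hK : 0 < K)
    (F : ℝ → ℝ)
    (hF : ∀ x, F x = ∫ u in Set.Iic x, (1 / Real.sqrt (2 * Real.pi)) * Real.exp (-u ^ 2 / 2))
    (phi : ℝ → ℝ)
    (hphi : ∀ y, phi y =
      if -K < y ∧ y ≤ 0 then y + K else if 0 < y ∧ y ≤ K then -y + K else 0)
    (U : ℝ → ℝ → ℝ)
    (hU : ∀ t y, t < 1 → U t y =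
      Real.sqrt ((1 - t) / (2 * Real.pi)) *
          (Real.exp (-(K + y) ^ 2 / (2 * (1 - t))) + Real.exp (-(K - y) ^ 2 / (2 * (1 - t)))
            - 2 * Real.exp (-y ^ 2 / (2 * (1 - t))))
        + (K + y) * (F (-y / Real.sqrt (1 - t)) - F ((-K - y) / Real.sqrt (1 - t)))
        + (K - y) * (F ((K - y) / Real.sqrt (1 - t)) - F (-y / Real.sqrt (1 - t)))) :
    ∀ y : ℝ, Tendsto (fun t => U t y) (nhdsWithin 1 (Set.Iio 1)) (nhds (phi y)) := by
  intro y
  have hF_eq : F = cdf (gaussianReal 0 1) :=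
    funext fun x => (hF x).trans (integral_Iic_stdGaussian_eq_cdf x)
  have hG := tendsto_cdf_gaussianReal_div tendsto_sqrt_one_sub_nhdsLT_one
  have hlim := ((tendsto_sqrt_mul_gaussian_terms_nhdsLT_one (K + y) (K - y) y).add
    (((hG (-y)).sub (hG (-K - y))).const_mul (K + y))).add
    (((hG (K - y)).sub (hG (-y))).const_mul (K - y))
  rw [zero_add] at hlim
  rw [hphi, triangle_eq_halfHeaviside hK]
  refine hlim.congr' ?_
  filter_upwards [self_mem_nhdsWithin] with t ht
  rw [hU t y ht, hF_eq]
end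

section
/- Let m ≥ 2, γ = m − 1, and T_k = T(1 − (1 − k/N)^{m−1}). Then there exists C > 0 (independent of N) such that Σ_{j=0}^{N−2} Δ_{T_{j+1}}^{(m+1)/2} (T − T_j)^{−m/2} ≤ C N^{−(m−1)/2} ln(N) for all N ≥ 2. -/
/-!
Put `x_j = 1 - j/N`, so that `T - T_j = T x_j^γ`. Bernoulli's inequality (convexity of `x ↦ x^γ`)
gives `Δ_{T_{j+1}} ≤ T γ x_j^{γ-1} / N`. Since `γ = m - 1`, the powers of `x_j` in the `j`-th
summand combine to exactly `x_j⁻¹ = N / (N - j)`, so the sum is at most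
`C N^{-(m-1)/2} ∑_{k=2}^N 1/k ≤ C N^{-(m-1)/2} ln N`.
-/

open Real Finset

lemma rpow_sub_rpow_le_mul_rpow_sub_one_mul {a b p : ℝ} (ha : 0 ≤ a) (hb : 0 < b) (hp : 1 ≤ p) :
    b ^ p - a ^ p ≤ p * b ^ (p - 1) * (b - a) := by
  have hbern := one_add_mul_self_le_rpow_one_add (s := a / b - 1)
    (by linarith [div_nonneg ha hb.le]) hp
  rw [add_sub_cancel, div_rpow ha hb.le, le_div_iff₀ (rpow_pos_of_pos hb p)] at hbern
  rw [rpow_sub_one hb.ne']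
  have : (1 + p * (a / b - 1)) * b ^ p = b ^ p - p * (b ^ p / b) * (b - a) := by
    field_simp; ring
  linarith

lemma inv_le_log_sub_log_sub_one {k : ℝ} (hk : 1 < k) : k⁻¹ ≤ log k - log (k - 1) := by
  have h := one_sub_inv_le_log_of_pos (div_pos (by linarith : 0 < k) (by linarith : 0 < k - 1))
  rwa [inv_div, log_div (by linarith) (by linarith), one_sub_div (by linarith), sub_sub_cancel,
    one_div] at h

lemma sum_range_inv_natCast_sub_le_log (N : ℕ) :
    ∑ j ∈ range (N - 1), ((N : ℝ) - j)⁻¹ ≤ log N := by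
  calc ∑ j ∈ range (N - 1), ((N : ℝ) - j)⁻¹
      ≤ ∑ j ∈ range (N - 1), (log ((N : ℝ) - j) - log ((N : ℝ) - (j + 1 : ℕ))) := by
        refine sum_le_sum fun j hj => ?_
        have hjN : (j : ℝ) + 1 < N := by
          have := mem_range.1 hj
          exact_mod_cast (by omega : j + 1 < N)
        rw [Nat.cast_succ, ← sub_sub]
        exact inv_le_log_sub_log_sub_one (by linarith)
    _ = log N := by
        rw [sum_range_sub' (fun j => log ((N : ℝ) - j))]
        rcases N with _ | N <;> simp

lemma rpow_sub_rpow_summand_le {T q x y : ℝ} (hT : 0 < T) (hq : 2 ≤ q)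
    (hy : 0 ≤ y) (hyx : y ≤ x) (hx : 0 < x) :
    (T * (x ^ (q - 1) - y ^ (q - 1))) ^ ((q + 1) / 2) * (T * x ^ (q - 1)) ^ (-q / 2)
      ≤ T ^ (1 / 2 : ℝ) * (q - 1) ^ ((q + 1) / 2) * (x - y) ^ ((q + 1) / 2) / x := by
  have hq1 : 0 ≤ q - 1 := by linarith
  have hxy : 0 ≤ x - y := sub_nonneg.2 hyx
  have hincr : T * (x ^ (q - 1) - y ^ (q - 1)) ≤ T * ((q - 1) * x ^ (q - 2) * (x - y)) := by
    have := rpow_sub_rpow_le_mul_rpow_sub_one_mul hy hx (p := q - 1) (by linarith)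
    rw [sub_sub, one_add_one_eq_two] at this
    gcongr
  have hTpow : T ^ ((q + 1) / 2) * T ^ (-q / 2) = T ^ (1 / 2 : ℝ) := by
    rw [← rpow_add hT]; ring_nf
  have hxpow : x ^ ((q - 2) * ((q + 1) / 2)) * x ^ ((q - 1) * (-q / 2)) = x⁻¹ := by
    rw [← rpow_add hx, ← rpow_neg_one]; ring_nf
  calc (T * (x ^ (q - 1) - y ^ (q - 1))) ^ ((q + 1) / 2) * (T * x ^ (q - 1)) ^ (-q / 2)
      ≤ (T * ((q - 1) * x ^ (q - 2) * (x - y))) ^ ((q + 1) / 2) * (T * x ^ (q - 1)) ^ (-q / 2) := by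
        gcongr
        exact mul_nonneg hT.le (sub_nonneg.2 (rpow_le_rpow hy hyx hq1))
    _ = T ^ (1 / 2 : ℝ) * (q - 1) ^ ((q + 1) / 2) * (x - y) ^ ((q + 1) / 2) / x := by
        rw [mul_rpow hT.le (by positivity), mul_rpow (by positivity) hxy,
          mul_rpow hq1 (by positivity), mul_rpow hT.le (by positivity),
          ← rpow_mul hx.le, ← rpow_mul hx.le, div_eq_mul_inv _ x, ← hTpow, ← hxpow]
        ring

lemma gradedMesh_summand_le {T q : ℝ} (hT : 0 < T) (hq : 2 ≤ q) {N j : ℕ} (hj : j + 1 < N) :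
    (T * ((1 - (j : ℝ) / N) ^ (q - 1) - (1 - ((j + 1 : ℕ) : ℝ) / N) ^ (q - 1))) ^ ((q + 1) / 2)
        * (T * (1 - (j : ℝ) / N) ^ (q - 1)) ^ (-q / 2)
      ≤ T ^ (1 / 2 : ℝ) * (q - 1) ^ ((q + 1) / 2) * (N : ℝ) ^ (-(q - 1) / 2) * ((N : ℝ) - j)⁻¹ := by
  have hN : (0 : ℝ) < N := by exact_mod_cast (by omega : 0 < N)
  have hjN : (j : ℝ) + 1 < N := by exact_mod_cast hj
  have hsub : 1 - (j : ℝ) / N - (1 - ((j + 1 : ℕ) : ℝ) / N) = (N : ℝ)⁻¹ := by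
    field_simp; push_cast; ring
  have hxN : 1 - (j : ℝ) / N = (N - j) / N := by field_simp
  have hNpow : (N : ℝ)⁻¹ ^ ((q + 1) / 2) * N = (N : ℝ) ^ (-(q - 1) / 2) := by
    rw [inv_rpow hN.le, ← rpow_neg hN.le, ← rpow_add_one hN.ne']; ring_nf
  refine (rpow_sub_rpow_summand_le hT hq ?_ ?_ ?_).trans_eq ?_
  · rw [sub_nonneg, div_le_one hN]; exact_mod_cast hj.le
  · gcongr; omega
  · rw [hxN]; exact div_pos (by linarith) hN
  · rw [hsub, hxN, ← hNpow]; field_simp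

/-- Let `m ≥ 2`, `γ = m - 1` and `T_k = T(1-(1-k/N)^{m-1})`.  Then there is `C > 0`
independent of `N` such that
`Σ_{j=0}^{N-2} Δ_{T_{j+1}}^{(m+1)/2} (T - T_j)^{-m/2} ≤ C N^{-(m-1)/2} ln N` for all `N ≥ 2`. -/
theorem stmt_17 (T : ℝ) (hT : 0 < T) (m : ℕ) (hm : 2 ≤ m) (γ : ℝ) (hγ : γ = (m : ℝ) - 1)
    (Tk : ℕ → ℕ → ℝ)
    (hTk : ∀ N k, Tk N k = T * (1 - (1 - (k : ℝ) / (N : ℝ)) ^ γ)) :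
    ∃ C : ℝ, 0 < C ∧ ∀ N : ℕ, 2 ≤ N →
      ∑ j ∈ Finset.range (N - 1),
          (Tk N (j + 1) - Tk N j) ^ (((m : ℝ) + 1) / 2) * (T - Tk N j) ^ (-(m : ℝ) / 2)
        ≤ C * (N : ℝ) ^ (-((m : ℝ) - 1) / 2) * Real.log N := by
  subst hγ
  have hm' : (2 : ℝ) ≤ m := by exact_mod_cast hm
  set C : ℝ := T ^ (1 / 2 : ℝ) * ((m : ℝ) - 1) ^ (((m : ℝ) + 1) / 2)
  have hm1 : (0 : ℝ) < m - 1 := by linarith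
  refine ⟨C, by positivity, fun N _ => ?_⟩
  calc ∑ j ∈ range (N - 1),
          (Tk N (j + 1) - Tk N j) ^ (((m : ℝ) + 1) / 2) * (T - Tk N j) ^ (-(m : ℝ) / 2)
      ≤ ∑ j ∈ range (N - 1), C * (N : ℝ) ^ (-((m : ℝ) - 1) / 2) * ((N : ℝ) - j)⁻¹ := by
        refine sum_le_sum fun j hj => ?_
        have hjN : j + 1 < N := by have := mem_range.1 hj; omega
        have hΔ : Tk N (j + 1) - Tk N j = T * ((1 - (j : ℝ) / N) ^ ((m : ℝ) - 1)
            - (1 - ((j + 1 : ℕ) : ℝ) / N) ^ ((m : ℝ) - 1)) := by rw [hTk, hTk]; ring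
        have hrest : T - Tk N j = T * (1 - (j : ℝ) / N) ^ ((m : ℝ) - 1) := by rw [hTk]; ring
        rw [hΔ, hrest]
        exact gradedMesh_summand_le hT hm' hjN
    _ = C * (N : ℝ) ^ (-((m : ℝ) - 1) / 2) * ∑ j ∈ range (N - 1), ((N : ℝ) - j)⁻¹ :=
        (mul_sum ..).symm
    _ ≤ C * (N : ℝ) ^ (-((m : ℝ) - 1) / 2) * log N := by
        gcongr
        exact sum_range_inv_natCast_sub_le_log N
end
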